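/- For any two partitions λ and μ of a positive integer n not divisible by d, the character value χ_𝝀(d².μ) equals 0, where d².μ is obtained by multiplying every part of μ by d² and 𝝀 is the d-fold dilation of λ. -/

import Mathlib

/-- Murnaghan–Nakayama recursion on beta-sets: `MNchar S α` computes the character
value via successive rim-hook (border-strip) removals encoded by beta-numbers. -/
def MNchar : Finset ℕ → List ℕ → ℤ
  | S, [] => if S = Finset.range S.card then 1 else 0
  | S, k :: rest =>
      ∑ s ∈ S.filter (fun s => k ≤ s ∧ s - k ∉ S),
        (-1 : ℤ) ^ (S.filter (fun t => s - k < t ∧ t < s)).card *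
          MNchar (insert (s - k) (S.erase s)) rest

/-- Canonical beta-set of a partition (given as a multiset of parts). -/
def betaSet (P : Multiset ℕ) : Finset ℕ :=
  ((List.range (P.sort (· ≤ ·)).length).map
    (fun i => (P.sort (· ≤ ·)).getD i 0 + i)).toFinset

/-- Irreducible character of the symmetric group indexed by `lam`, at cycle type `mu`. -/
def chi (lam mu : Multiset ℕ) : ℤ := MNchar (betaSet lam) (mu.sort (· ≤ ·))

/-- d-fold dilation of a partition: each part p becomes d copies of d*p. -/
def dilate (d : ℕ) (P : Multiset ℕ) : Multiset ℕ :=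
  P.bind fun p => Multiset.replicate d (d * p)

/-- Scale every part of a partition by d. -/
def scale (d : ℕ) (P : Multiset ℕ) : Multiset ℕ := P.map (d * ·)

def IsPartitionOf (n : ℕ) (P : Multiset ℕ) : Prop := (∀ p ∈ P, 0 < p) ∧ P.sum = n

def zerosBefore (β : List Bool) (j : ℕ) : ℕ := (β.take j).count false

/-- Shape of a binary sequence: one part for each `true`, equal to the number of
`false`s to its left (zero parts discarded). -/
def shapeOf (β : List Bool) : Multiset ℕ :=
  ↑((List.range β.length).filterMap fun j =>
      if β.getD j false = true ∧ 0 < zerosBefore β j then some (zerosBefore β j) else none)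

/-- The word of a partition: the unique binary sequence starting with 0 and ending
with 1 whose shape is the partition. -/
def word (P : Multiset ℕ) : List Bool :=
  (List.range (P.sup + Multiset.card P)).map fun j => decide (j ∈ betaSet P)

/-- Cells of the Young diagram of a partition. -/
def cells (P : Multiset ℕ) : Finset (ℕ × ℕ) :=
  (Finset.range (Multiset.card P) ×ˢ Finset.range (P.sup + 1)).filter
    fun x => x.2 < ((P.sort (· ≤ ·)).reverse.getD x.1 0)

def CellAdj (x y : ℕ × ℕ) : Prop :=
  (x.1 = y.1 ∧ (x.2 = y.2 + 1 ∨ y.2 = x.2 + 1)) ∨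
  (x.2 = y.2 ∧ (x.1 = y.1 + 1 ∨ y.1 = x.1 + 1))

/-- A set of cells is a rim hook: nonempty, connected, no 2×2 square. -/
def IsRimHook (s : Finset (ℕ × ℕ)) : Prop :=
  s.Nonempty ∧
  (∀ x ∈ s, ∀ y ∈ s, Relation.ReflTransGen (fun u v => v ∈ s ∧ CellAdj u v) x y) ∧
  ∀ i j : ℕ, ¬((i, j) ∈ s ∧ (i + 1, j) ∈ s ∧ (i, j + 1) ∈ s ∧ (i + 1, j + 1) ∈ s)

/-- A cascade, encoded by its first row and the sequence of 0-1 swap positions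
`(aᵢ, bᵢ)` relating consecutive rows. -/
structure Cascade where
  top : List Bool
  swaps : List (ℕ × ℕ)

def applySwaps (r : List Bool) (s : List (ℕ × ℕ)) : List Bool :=
  s.foldl (fun r ab => (r.set ab.1 true).set ab.2 false) r

def cascadeRow (C : Cascade) (i : ℕ) : List Bool := applySwaps C.top (C.swaps.take i)

def cascadeBot (C : Cascade) : List Bool := applySwaps C.top C.swaps

/-- The defining conditions of a cascade. -/
def Cascade.Valid (C : Cascade) : Prop :=
  C.top.head? = some false ∧ C.top.getLast? = some true ∧
  (∀ i < C.swaps.length,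
    (C.swaps.getD i (0, 0)).1 < (C.swaps.getD i (0, 0)).2 ∧
    (C.swaps.getD i (0, 0)).2 < (cascadeRow C i).length ∧
    (cascadeRow C i).getD (C.swaps.getD i (0, 0)).1 true = false ∧
    (cascadeRow C i).getD (C.swaps.getD i (0, 0)).2 false = true) ∧
  ∃ u v, cascadeBot C = List.replicate u true ++ List.replicate v false

def cascadeShape (C : Cascade) : Multiset ℕ := shapeOf C.top

def cascadeContent (C : Cascade) : List ℕ := C.swaps.map fun ab => ab.2 - ab.1

/-- Crossings of a cascade: pairs (i,j) with row i having a 1 in position j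
strictly between the swapped positions aᵢ < j < bᵢ. -/
def cascadeCrossings (C : Cascade) : Finset (ℕ × ℕ) :=
  (Finset.range C.swaps.length ×ˢ Finset.range C.top.length).filter fun ij =>
    (cascadeRow C ij.1).getD ij.2 false = true ∧
    (C.swaps.getD ij.1 (0, 0)).1 < ij.2 ∧ ij.2 < (C.swaps.getD ij.1 (0, 0)).2

def cascadeWt (C : Cascade) : ℤ := (-1) ^ (cascadeCrossings C).card

def traceSwaps (s : List (ℕ × ℕ)) (p : ℕ) : ℕ :=
  s.foldl (fun p ab => if p = ab.1 then ab.2 else if p = ab.2 then ab.1 else p) p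

/-- The path starting in column x: its position after i swaps. -/
def cascadePath (C : Cascade) (x i : ℕ) : ℕ := traceSwaps (C.swaps.take i) x

def onesPositions (r : List Bool) : List ℕ :=
  (List.range r.length).filter fun j => r.getD j false

/-- The permutation π_C associated to a cascade, as a function on {0,…,k−1}. -/
def cascadePerm (C : Cascade) (j : ℕ) : ℕ :=
  (onesPositions (cascadeBot C)).idxOf
    (traceSwaps C.swaps ((onesPositions C.top).getD j 0))

/-- Sign of a function on {0,…,k−1} via inversion count. -/
def signOf (f : ℕ → ℕ) (k : ℕ) : ℤ :=
  (-1) ^ ((Finset.range k ×ˢ Finset.range k).filter fun p =>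
      p.1 < p.2 ∧ f p.2 < f p.1).card

/-- Crossings of the two paths starting in columns x and y. -/
def pathCrossings (C : Cascade) (x y : ℕ) : Finset (ℕ × ℕ) :=
  (Finset.range C.swaps.length ×ˢ Finset.range C.top.length).filter fun ij =>
    cascadePath C x ij.1 = ij.2 ∧ cascadePath C x ij.1 < cascadePath C y ij.1 ∧
    cascadePath C y (ij.1 + 1) < cascadePath C x (ij.1 + 1)

def rimRows (s : Finset (ℕ × ℕ)) : ℕ := (s.image Prod.fst).card

/-- A rim hook tableau, as the chain of successive shapes λ¹ ⊃ … ⊃ λ^{m+1} = ∅. -/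
def IsRHT (T : List (Multiset ℕ)) : Prop :=
  2 ≤ T.length ∧ (∀ P ∈ T, ∀ p ∈ P, 0 < p) ∧ T.getLast? = some 0 ∧
  ∀ i, i + 1 < T.length →
    cells (T.getD (i + 1) 0) ⊆ cells (T.getD i 0) ∧
    IsRimHook (cells (T.getD i 0) \ cells (T.getD (i + 1) 0))

def tabShape (T : List (Multiset ℕ)) : Multiset ℕ := T.headI

def tabContent (T : List (Multiset ℕ)) : List ℕ :=
  (List.range (T.length - 1)).map fun i =>
    (cells (T.getD i 0) \ cells (T.getD (i + 1) 0)).card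

def tabWt (T : List (Multiset ℕ)) : ℤ :=
  ∏ i ∈ Finset.range (T.length - 1),
    (-1 : ℤ) ^ (rimRows (cells (T.getD i 0) \ cells (T.getD (i + 1) 0)) - 1)

/-- Θ : cascades → rim hook tableaux, via the shapes of the successive rows. -/
def theta (C : Cascade) : List (Multiset ℕ) :=
  (List.range (C.swaps.length + 1)).map fun i => shapeOf (cascadeRow C i)

/-- The block column permutation: j = i + d·k with i < d goes to σ(i) + d·k. -/
def gammaMap (d : ℕ) (σ : Equiv.Perm (Fin d)) (j : ℕ) : ℕ :=
  if h : 0 < d then d * (j / d) + (σ ⟨j % d, Nat.mod_lt j h⟩ : ℕ) else j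

def permuteCols (d : ℕ) (σ : Equiv.Perm (Fin d)) (r : List Bool) : List Bool :=
  (List.range r.length).map fun j => r.getD (gammaMap d σ⁻¹ j) false

/-- The action of σ ∈ S_d on a cascade: permute columns within blocks of size d. -/
def actC (d : ℕ) (σ : Equiv.Perm (Fin d)) (C : Cascade) : Cascade :=
  ⟨permuteCols d σ C.top, C.swaps.map fun ab => (gammaMap d σ ab.1, gammaMap d σ ab.2)⟩

/-!
Removing a rim hook of length `k` moves one bead of the beta-set from `s` to `s - k`. When
`d² ∣ k` this does not change the second base-`d` digit `s / d % d`, so the sum of these digits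
over the beta-set is invariant along the Murnaghan–Nakayama recursion, and the character value
vanishes unless it agrees with its value on `{0, …, N - 1}`, the beta-set of size `N` of the
empty partition. For the dilation `𝝀` of `λ = (λ₀ ≤ λ₁ ≤ …)` the beta-numbers come in blocks
of `d` consecutive integers starting at `d (λⱼ + j)`, so the digit sum is
`d ∑ⱼ ((λⱼ + j) % d)`, against `d ∑ⱼ (j % d)` for the empty partition; equality would force
`d ∣ ∑ⱼ λⱼ = n`.
-/

open Finset

def secondDigitSum (d : ℕ) (S : Finset ℕ) : ℕ := ∑ s ∈ S, s / d % d

lemma sub_div_mod_eq_of_sq_dvd {d k s : ℕ} (hks : k ≤ s) (hk : d ^ 2 ∣ k) :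
    (s - k) / d % d = s / d % d := by
  obtain rfl | hd := d.eq_zero_or_pos
  · simp
  obtain ⟨t, rfl⟩ := hk
  have hs : s = (s - d ^ 2 * t) + d * (d * t) := by rw [← mul_assoc, ← sq]; omega
  conv_rhs => rw [hs, Nat.add_mul_div_left _ _ hd, Nat.add_mul_mod_self_left]

lemma secondDigitSum_insert_sub_erase {d k s : ℕ} {S : Finset ℕ} (hs : s ∈ S) (hks : k ≤ s)
    (hk : d ^ 2 ∣ k) (hsk : s - k ∉ S) :
    secondDigitSum d (insert (s - k) (S.erase s)) = secondDigitSum d S := by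
  rw [secondDigitSum, sum_insert fun h => hsk (mem_of_mem_erase h),
    sub_div_mod_eq_of_sq_dvd hks hk]
  exact add_sum_erase S (fun s => s / d % d) hs

theorem MNchar_eq_zero_of_secondDigitSum_ne {d : ℕ} :
    ∀ {L : List ℕ} {S : Finset ℕ}, (∀ k ∈ L, d ^ 2 ∣ k) →
      secondDigitSum d S ≠ secondDigitSum d (range #S) → MNchar S L = 0
  | [], S, _, hS => by
    rw [MNchar, if_neg]
    rintro h
    exact hS (congrArg _ h)
  | k :: L, S, hL, hS => by
    refine sum_eq_zero fun s hs => ?_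
    obtain ⟨hsS, hks, hsk⟩ := mem_filter.1 hs
    have hcard : #(insert (s - k) (S.erase s)) = #S := by
      rw [card_insert_of_notMem fun h => hsk (mem_of_mem_erase h), card_erase_add_one hsS]
    have hk : d ^ 2 ∣ k := hL k List.mem_cons_self
    rw [MNchar_eq_zero_of_secondDigitSum_ne (fun j hj => hL j (List.mem_cons_of_mem _ hj))
      (by rwa [hcard, secondDigitSum_insert_sub_erase hsS hks hk hsk]), mul_zero]

lemma injOn_getD_add_of_pairwise_le {l : List ℕ} (hl : l.Pairwise (· ≤ ·)) :
    Set.InjOn (fun i => l.getD i 0 + i) (range l.length) := by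
  have hmono : ∀ i j, i < j → j < l.length → l.getD i 0 ≤ l.getD j 0 := fun i j hij hj => by
    rw [List.getD_eq_getElem _ _ (hij.trans hj), List.getD_eq_getElem _ _ hj]
    exact List.pairwise_iff_getElem.1 hl i j (hij.trans hj) hj hij
  intro i hi j hj hij
  simp only [coe_range, Set.mem_Iio] at hi hj
  rcases lt_trichotomy i j with h | h | h
  · have := hmono i j h hj; simp only at hij; omega
  · exact h
  · have := hmono j i h hi; simp only at hij; omega

lemma betaSet_eq_image (P : Multiset ℕ) :
    betaSet P = (range (Multiset.card P)).image fun i => (P.sort (· ≤ ·)).getD i 0 + i := by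
  ext
  simp [betaSet, Multiset.length_sort]

lemma injOn_betaSet (P : Multiset ℕ) :
    Set.InjOn (fun i => (P.sort (· ≤ ·)).getD i 0 + i) (range (Multiset.card P)) := by
  rw [← Multiset.length_sort (· ≤ ·)]
  exact injOn_getD_add_of_pairwise_le (Multiset.pairwise_sort P (· ≤ ·))

lemma card_betaSet (P : Multiset ℕ) : #(betaSet P) = Multiset.card P := by
  rw [betaSet_eq_image, card_image_of_injOn (injOn_betaSet P), card_range]

lemma sum_betaSet {M : Type*} [AddCommMonoid M] (P : Multiset ℕ) (f : ℕ → M) :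
    ∑ s ∈ betaSet P, f s =
      ∑ i ∈ range (Multiset.card P), f ((P.sort (· ≤ ·)).getD i 0 + i) := by
  rw [betaSet_eq_image, sum_image (injOn_betaSet P)]

lemma pairwise_le_flatMap_replicate {f : ℕ → ℕ} (hf : Monotone f) (d : ℕ) {l : List ℕ}
    (hl : l.Pairwise (· ≤ ·)) :
    (l.flatMap fun p => List.replicate d (f p)).Pairwise (· ≤ ·) := by
  refine List.pairwise_flatMap.2 ⟨fun p _ => List.pairwise_replicate.2 (Or.inr le_rfl), ?_⟩
  refine hl.imp fun hpq x hx y hy => ?_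
  rw [List.eq_of_mem_replicate hx, List.eq_of_mem_replicate hy]
  exact hf hpq

lemma getD_flatMap_replicate (f : ℕ → ℕ) (d : ℕ) :
    ∀ (l : List ℕ) {i : ℕ}, i < d * l.length →
      (l.flatMap fun p => List.replicate d (f p)).getD i 0 = f (l.getD (i / d) 0)
  | [], i, hi => by simp at hi
  | p :: l, i, hi => by
    rw [List.flatMap_cons]
    by_cases hid : i < d
    · rw [List.getD_append _ _ _ _ (by simpa using hid), Nat.div_eq_of_lt hid,
        List.getD_cons_zero, List.getD_eq_getElem _ _ (by simpa using hid),
        List.getElem_replicate]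
    · rw [not_lt] at hid
      have hd : 0 < d := Nat.pos_of_ne_zero fun h => by simp [h] at hi
      have hi' : i - d < d * l.length := by
        rw [List.length_cons, Nat.mul_succ] at hi; omega
      rw [List.getD_append_right _ _ _ _ (by simpa using hid), List.length_replicate,
        getD_flatMap_replicate f d l hi', Nat.div_eq_sub_div hd hid, List.getD_cons_succ]

lemma sort_dilate (d : ℕ) (P : Multiset ℕ) :
    (dilate d P).sort (· ≤ ·) =
      (P.sort (· ≤ ·)).flatMap fun p => List.replicate d (d * p) := by
  refine List.Perm.eq_of_pairwise' (Multiset.pairwise_sort _ _)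
    (pairwise_le_flatMap_replicate (fun _ _ h => Nat.mul_le_mul_left d h) d
      (Multiset.pairwise_sort _ _)) (Multiset.coe_eq_coe.1 ?_)
  rw [Multiset.sort_eq, ← Multiset.coe_bind]
  simp only [Multiset.coe_replicate, Multiset.sort_eq]
  rfl

lemma card_dilate (d : ℕ) (P : Multiset ℕ) :
    Multiset.card (dilate d P) = d * Multiset.card P := by
  simp [dilate, Multiset.card_bind, mul_comm]

lemma sum_range_mul_div {M : Type*} [AddCommMonoid M] {d : ℕ} (hd : 0 < d) (F : ℕ → M)
    (m : ℕ) :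
    ∑ i ∈ range (d * m), F (i / d) = d • ∑ j ∈ range m, F j := by
  induction m with
  | zero => simp
  | succ m ih =>
    have hblock : ∀ r ∈ range d, F ((d * m + r) / d) = F m := fun r hr => by
      rw [Nat.mul_add_div hd, Nat.div_eq_of_lt (mem_range.1 hr), add_zero]
    rw [Nat.mul_succ, sum_range_add, ih, sum_congr rfl hblock, sum_const, card_range,
      sum_range_succ, smul_add]

lemma secondDigitSum_range_mul {d : ℕ} (hd : 0 < d) (m : ℕ) :
    secondDigitSum d (range (d * m)) = d * ∑ j ∈ range m, j % d :=
  sum_range_mul_div hd (· % d) m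

lemma secondDigitSum_betaSet_dilate {d : ℕ} (hd : 0 < d) (P : Multiset ℕ) :
    secondDigitSum d (betaSet (dilate d P)) =
      d * ∑ j ∈ range (Multiset.card P), ((P.sort (· ≤ ·)).getD j 0 + j) % d := by
  rw [secondDigitSum, sum_betaSet, card_dilate]
  refine (sum_congr rfl fun i hi => ?_).trans (sum_range_mul_div hd _ _)
  rw [sort_dilate, getD_flatMap_replicate _ _ _ (by simpa [Multiset.length_sort] using hi),
    add_comm, Nat.add_mul_div_left _ _ hd, add_comm]

lemma sum_range_length_getD (l : List ℕ) : ∑ i ∈ range l.length, l.getD i 0 = l.sum := by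
  rw [← Fin.sum_univ_eq_sum_range, ← List.sum_ofFn]
  simp

lemma secondDigitSum_betaSet_dilate_ne {d : ℕ} (hd : 0 < d) {P : Multiset ℕ}
    (hP : ¬ d ∣ P.sum) :
    secondDigitSum d (betaSet (dilate d P)) ≠
      secondDigitSum d (range #(betaSet (dilate d P))) := by
  rw [card_betaSet, card_dilate, secondDigitSum_betaSet_dilate hd, secondDigitSum_range_mul hd]
  intro h
  set l := P.sort (· ≤ ·)
  have hsum : ∑ j ∈ range (Multiset.card P), l.getD j 0 = P.sum := by
    rw [← Multiset.length_sort (· ≤ ·), sum_range_length_getD, ← Multiset.sum_coe,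
      Multiset.sort_eq]
  set m := Multiset.card P
  refine hP (Nat.modEq_zero_iff_dvd.1 (Nat.ModEq.add_right_cancel' (∑ j ∈ range m, j) ?_))
  calc P.sum + ∑ j ∈ range m, j
      = ∑ j ∈ range m, (l.getD j 0 + j) := by rw [sum_add_distrib, hsum]
    _ ≡ ∑ j ∈ range m, (l.getD j 0 + j) % d [MOD d] := sum_nat_mod _ _ _
    _ = ∑ j ∈ range m, j % d := Nat.eq_of_mul_eq_mul_left hd h
    _ ≡ ∑ j ∈ range m, j [MOD d] := (sum_nat_mod _ _ _).symm
    _ = 0 + ∑ j ∈ range m, j := (zero_add _).symm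

theorem chi_dilate_scale_sq_eq_zero_general (d n : ℕ) (hd : 0 < d) (hdn : ¬ d ∣ n)
    (lam mu : Multiset ℕ) (hlam : IsPartitionOf n lam) :
    chi (dilate d lam) (scale (d ^ 2) mu) = 0 := by
  refine MNchar_eq_zero_of_secondDigitSum_ne (fun k hk => ?_)
    (secondDigitSum_betaSet_dilate_ne hd (hlam.2 ▸ hdn))
  obtain ⟨x, -, rfl⟩ := Multiset.mem_map.1 ((Multiset.mem_sort _).1 hk)
  exact dvd_mul_right _ _

/-- Miller, Theorem 1, (3): for partitions λ, μ of a positive integer n not divisible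
by d, χ_𝝀(d².μ) = 0. -/
theorem chi_dilate_scale_sq_eq_zero (d n : ℕ) (hd : 0 < d) (hn : 0 < n) (hdn : ¬ d ∣ n)
    (lam mu : Multiset ℕ) (hlam : IsPartitionOf n lam) (hmu : IsPartitionOf n mu) :
    chi (dilate d lam) (scale (d ^ 2) mu) = 0 :=
  chi_dilate_scale_sq_eq_zero_general d n hd hdn lam mu hlam
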